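/- Let k be a non-negative integer and let τ be a locally compact Hausdorff shift-continuous topology on B⁰(B_k) in which the adjoined zero 0* is not isolated. Then for every open neighborhood U of 0* there exists a non-negative integer n such that the set U ∩ [n,m] is non-empty for infinitely many non-negative integers m. -/

import Mathlib

/-!
Left multiplication by the idempotent `(r,1,r)` fixes `0*` and the rows `≥ r` of `B⁰(S)` and
moves every point of a row `< r`, so in a Hausdorff shift-continuous topology the rows `< r` form
an open set, and a compact set avoiding `0*` meets only finitely many rows.

Take a compact neighbourhood `K ⊆ U` of `0*` with interior `V`. The points of `K` that are not in
`V`, or that the column shift `x ↦ x·(0,1,1)` moves out of `V`, form such a compact set, so from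
some row `j` on the column shift maps `V` into itself. If row `0` meets only the boxes `[0,m]`
with `m ≤ μ`, then `x ↦ (0,1,j+μ)·x` sends every point of a row `< j` into row `0` beyond
column `μ`; hence the non-zero points of `V` near `0*`, which exist as `0*` is not isolated, lie
in rows `≥ j`. Shifting one of them along its row gives infinitely many boxes of that row
meeting `V ⊆ U`.
-/


open Ordinal Set Topology

noncomputable section

/-- The `α`-bicyclic monoid: pairs of ordinals below `ω ^ α`. -/
def Bicyclic (α : Ordinal) : Type 1 :=
  {p : Ordinal × Ordinal // p.1 < ω ^ α ∧ p.2 < ω ^ α}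

namespace Bicyclic

variable {α : Ordinal}

def mk (a b : Ordinal) (ha : a < ω ^ α) (hb : b < ω ^ α) : Bicyclic α :=
  ⟨(a, b), ha, hb⟩

instance : Mul (Bicyclic α) :=
  ⟨fun x y =>
    if x.val.2 ≤ y.val.1 then
      ⟨(x.val.1 + (y.val.1 - x.val.2), y.val.2),
        (principal_add_omega0_opow α) x.2.1
          (lt_of_le_of_lt (Ordinal.sub_le_self _ _) y.2.1),
        y.2.2⟩
    else
      ⟨(x.val.1, y.val.2 + (x.val.2 - y.val.1)),
        x.2.1,
        (principal_add_omega0_opow α) y.2.2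
          (lt_of_le_of_lt (Ordinal.sub_le_self _ _) x.2.2)⟩⟩

instance : One (Bicyclic α) :=
  ⟨⟨(0, 0), opow_pos α omega0_pos, opow_pos α omega0_pos⟩⟩

end Bicyclic

/-- The Bruck extension of a semigroup `S`. -/
def Bruck (S : Type*) : Type _ := ℕ × S × ℕ

def Bruck.mk {S : Type*} (n : ℕ) (s : S) (m : ℕ) : Bruck S := (n, s, m)

instance {S : Type*} [Mul S] : Mul (Bruck S) :=
  ⟨fun x y =>
    if x.2.2 < y.1 then (x.1 + y.1 - x.2.2, y.2.1, y.2.2)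
    else if y.1 < x.2.2 then (x.1, x.2.1, y.2.2 + x.2.2 - y.1)
    else (x.1, x.2.1 * y.2.1, y.2.2)⟩

/-- The Bruck extension of `S` with an adjoined (absorbing) zero `0*`. -/
abbrev BruckZero (S : Type*) := WithZero (Bruck S)

/-- The box `[n,m]` in the Bruck extension with zero. -/
def box (S : Type*) (n m : ℕ) : Set (BruckZero S) :=
  {x | ∃ s : S, x = ↑(Bruck.mk n s m)}

/-- A topology on `X` is shift-continuous if all two-sided shifts `x ↦ a * x * b`
are continuous. -/
def ShiftContinuous (X : Type*) [Mul X] [TopologicalSpace X] : Prop :=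
  ∀ a b : X, Continuous fun x => a * x * b

open Filter

namespace Bicyclic

variable {α : Ordinal}

lemma val_mul (x y : Bicyclic α) : (x * y).val =
    if x.val.2 ≤ y.val.1 then (x.val.1 + (y.val.1 - x.val.2), y.val.2)
    else (x.val.1, y.val.2 + (x.val.2 - y.val.1)) :=
  apply_ite Subtype.val _ _ _

lemma val_one : (1 : Bicyclic α).val = (0, 0) := rfl

instance : MulOneClass (Bicyclic α) where
  one_mul s := Subtype.ext <| by simp [val_mul, val_one]
  mul_one s := Subtype.ext <| by
    rw [val_mul, val_one]
    split_ifs with h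
    · have h0 : s.val.2 = 0 := le_antisymm h zero_le
      ext <;> simp [h0]
    · simp

end Bicyclic

namespace Bruck

variable {S : Type*}

lemma mk_mul_mk [Mul S] (n m n' m' : ℕ) (s s' : S) :
    mk n s m * mk n' s' m' =
      if m < n' then mk (n + n' - m) s' m'
      else if n' < m then mk n s (m' + m - n')
      else mk n (s * s') m' := rfl

lemma mk_mul_mk_of_lt [Mul S] {m n : ℕ} (h : n < m) (a m' : ℕ) (s s' : S) :
    mk a s m * mk n s' m' = mk a s (m' + m - n) := by
  rw [mk_mul_mk, if_neg (by omega), if_pos h]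

variable [MulOneClass S]

instance : MulOneClass (Bruck S) where
  one := mk 0 1 0
  one_mul := by
    rintro ⟨n, s, m⟩
    change mk 0 1 0 * mk n s m = mk n s m
    rcases Nat.eq_zero_or_pos n with rfl | hn
    · rw [mk_mul_mk, if_neg (by omega), if_neg (by omega), one_mul]
    · rw [mk_mul_mk, if_pos hn, zero_add, Nat.sub_zero]
  mul_one := by
    rintro ⟨n, s, m⟩
    change mk n s m * mk 0 1 0 = mk n s m
    rcases Nat.eq_zero_or_pos m with rfl | hm
    · rw [mk_mul_mk, if_neg (by omega), if_neg (by omega), mul_one]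
    · rw [mk_mul_mk_of_lt hm, zero_add, Nat.sub_zero]

lemma mk_mul_mk_zero_one_one (n m : ℕ) (s : S) : mk n s m * mk 0 1 1 = mk n s (m + 1) := by
  rcases Nat.eq_zero_or_pos m with rfl | hm
  · rw [mk_mul_mk, if_neg (lt_irrefl 0), if_neg (lt_irrefl 0), mul_one]
  · rw [mk_mul_mk_of_lt hm, Nat.sub_zero, add_comm]

lemma mk_one_mul_mk_of_le {r n : ℕ} (h : r ≤ n) (m : ℕ) (s : S) :
    mk r 1 r * mk n s m = mk n s m := by
  rcases h.eq_or_lt with rfl | h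
  · rw [mk_mul_mk, if_neg (lt_irrefl r), if_neg (lt_irrefl r), one_mul]
  · rw [mk_mul_mk, if_pos h, Nat.add_sub_cancel_left]

end Bruck

section ShiftContinuous

variable {X : Type*} [MulOneClass X] [TopologicalSpace X]

lemma ShiftContinuous.continuous_mul_left (h : ShiftContinuous X) (a : X) :
    Continuous (a * ·) := by
  simpa only [mul_one] using h a 1

lemma ShiftContinuous.continuous_mul_right (h : ShiftContinuous X) (b : X) :
    Continuous (· * b) := by
  simpa only [one_mul] using h 1 b

end ShiftContinuous

namespace BruckZero

variable {S : Type*}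

def rowsBelow (S : Type*) (r : ℕ) : Set (BruckZero S) :=
  {x | ∃ b : Bruck S, b.1 < r ∧ x = b}

lemma coe_mem_rowsBelow {r : ℕ} {b : Bruck S} : (b : BruckZero S) ∈ rowsBelow S r ↔ b.1 < r :=
  ⟨fun ⟨_, hb, hbb⟩ => WithZero.coe_inj.mp hbb ▸ hb, fun hb => ⟨b, hb, rfl⟩⟩

lemma zero_notMem_rowsBelow (r : ℕ) : (0 : BruckZero S) ∉ rowsBelow S r :=
  fun ⟨_, _, h⟩ => WithZero.zero_ne_coe h

variable [MulOneClass S]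

lemma compl_rowsBelow (r : ℕ) :
    (rowsBelow S r)ᶜ = {x | ((Bruck.mk r 1 r : Bruck S) : BruckZero S) * x = x} := by
  ext x
  induction x using WithZero.recZeroCoe with
  | zero => simp [zero_notMem_rowsBelow]
  | coe b =>
    obtain ⟨n, s, m⟩ := b
    change (Bruck.mk n s m : BruckZero S) ∉ _ ↔ (Bruck.mk n s m : BruckZero S) ∈ _
    rw [coe_mem_rowsBelow, Set.mem_ofPred_eq, ← WithZero.coe_mul,
      WithZero.coe_inj, not_lt]
    refine ⟨fun h => Bruck.mk_one_mul_mk_of_le h m s, fun h => not_lt.mp fun (hn : n < r) => ?_⟩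
    rw [Bruck.mk_mul_mk_of_lt hn] at h
    exact hn.ne' (congrArg Prod.fst h)

variable [TopologicalSpace (BruckZero S)]

lemma isOpen_rowsBelow [T2Space (BruckZero S)] (hτ : ShiftContinuous (BruckZero S)) (r : ℕ) :
    IsOpen (rowsBelow S r) := by
  rw [← isClosed_compl_iff, compl_rowsBelow]
  exact isClosed_eq (hτ.continuous_mul_left _) continuous_id

lemma _root_.IsCompact.exists_subset_rowsBelow [T2Space (BruckZero S)]
    (hτ : ShiftContinuous (BruckZero S)) {C : Set (BruckZero S)} (hC : IsCompact C)
    (h0 : (0 : BruckZero S) ∉ C) : ∃ r, C ⊆ rowsBelow S r := by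
  refine hC.elim_directed_cover _ (isOpen_rowsBelow hτ) (fun x hx => ?_) ?_
  · obtain ⟨b, rfl⟩ := WithZero.ne_zero_iff_exists.mp (ne_of_mem_of_not_mem hx h0)
    exact Set.mem_iUnion.mpr ⟨b.1 + 1, coe_mem_rowsBelow.mpr (Nat.lt_succ_self _)⟩
  · exact Monotone.directed_le fun r r' hr x ⟨b, hb, hx⟩ => ⟨b, hb.trans_le hr, hx⟩

lemma exists_row_forall_mul_mem [T2Space (BruckZero S)] (hτ : ShiftContinuous (BruckZero S))
    {K V : Set (BruckZero S)} (hK : IsCompact K) (hV : IsOpen V) (hVK : V ⊆ K)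
    (h0V : (0 : BruckZero S) ∈ V) (c : BruckZero S) :
    ∃ r, ∀ b : Bruck S, r ≤ b.1 → (b : BruckZero S) ∈ V → (b : BruckZero S) * c ∈ V := by
  set O := V ∩ (· * c) ⁻¹' V
  have hO : IsOpen O := hV.inter (hV.preimage (hτ.continuous_mul_right c))
  have h0O : (0 : BruckZero S) ∈ O := ⟨h0V, by simpa only [Set.mem_preimage, zero_mul]⟩
  obtain ⟨r, hr⟩ := (hK.diff hO).exists_subset_rowsBelow hτ (fun h => h.2 h0O)
  refine ⟨r, fun b hrb hb => by_contra fun hbc => ?_⟩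
  exact (coe_mem_rowsBelow.mp (hr ⟨hVK hb, fun h => hbc h.2⟩)).not_ge hrb

lemma exists_row_ge_mem_of_bddAbove (hτ : ShiftContinuous (BruckZero S))
    (h0 : ¬ IsOpen ({0} : Set (BruckZero S))) {U W : Set (BruckZero S)}
    (hU : U ∈ 𝓝 0) (hW : W ∈ 𝓝 0) (hrow : BddAbove {m | (U ∩ box S 0 m).Nonempty}) (j : ℕ) :
    ∃ b : Bruck S, j ≤ b.1 ∧ (b : BruckZero S) ∈ W := by
  obtain ⟨μ, hμ⟩ := hrow
  set a : BruckZero S := ↑(Bruck.mk 0 (1 : S) (j + μ))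
  have ha : (a * ·) ⁻¹' U ∈ 𝓝 0 :=
    (hτ.continuous_mul_left a).continuousAt.preimage_mem_nhds (by rwa [mul_zero])
  have : (𝓝[≠] (0 : BruckZero S)).NeBot := ⟨by rwa [Ne, ← isOpen_singleton_iff_punctured_nhds]⟩
  have hW' : W ∩ (a * ·) ⁻¹' U ∩ {0}ᶜ ∈ 𝓝[≠] 0 :=
    inter_mem (mem_nhdsWithin_of_mem_nhds (inter_mem hW ha)) self_mem_nhdsWithin
  obtain ⟨x, ⟨hxW, hxa⟩, hx0⟩ := Filter.nonempty_of_mem hW'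
  obtain ⟨⟨n, s, m⟩, rfl⟩ := WithZero.ne_zero_iff_exists.mp hx0
  refine ⟨⟨n, s, m⟩, not_lt.mp fun hn => ?_, hxW⟩
  have hcol : m + (j + μ) - n ∈ {m | (U ∩ box S 0 m).Nonempty} := by
    refine ⟨a * ↑(Bruck.mk n s m), hxa, 1, ?_⟩
    rw [← WithZero.coe_mul, Bruck.mk_mul_mk_of_lt (by omega)]
  have := hμ hcol
  omega

theorem exists_row_meeting_infinitely_many_boxes [T2Space (BruckZero S)]
    [LocallyCompactSpace (BruckZero S)] (hτ : ShiftContinuous (BruckZero S))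
    (h0 : ¬ IsOpen ({0} : Set (BruckZero S))) {U : Set (BruckZero S)} (hU : U ∈ 𝓝 0) :
    ∃ n : ℕ, {m : ℕ | (U ∩ box S n m).Nonempty}.Infinite := by
  by_cases hrow : {m | (U ∩ box S 0 m).Nonempty}.Infinite
  · exact ⟨0, hrow⟩
  obtain ⟨K, hK0, hKU, hK⟩ := local_compact_nhds hU
  obtain ⟨j, hj⟩ := exists_row_forall_mul_mem hτ hK isOpen_interior interior_subset
    (mem_interior_iff_mem_nhds.mpr hK0) (Bruck.mk 0 1 1 : Bruck S)
  obtain ⟨⟨n, s, m⟩, hjn, hb⟩ := exists_row_ge_mem_of_bddAbove hτ h0 hU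
    (interior_mem_nhds.mpr hK0) (Set.not_infinite.mp hrow).bddAbove j
  have hshift : ∀ i, (Bruck.mk n s (m + i) : BruckZero S) ∈ interior K := by
    intro i
    induction i with
    | zero => exact hb
    | succ i ih =>
      have := hj (Bruck.mk n s (m + i)) hjn ih
      rwa [← WithZero.coe_mul, Bruck.mk_mul_mk_zero_one_one] at this
  refine ⟨n, Set.infinite_of_injective_forall_mem (add_right_injective m) fun i => ?_⟩
  exact ⟨_, hKU (interior_subset (hshift i)), s, rfl⟩

end BruckZero

/-- For a locally compact Hausdorff shift-continuous topology on `B⁰(B_k)`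
with non-isolated zero, every open neighborhood `U` of `0*` meets the boxes `[n,m]` for
some `n` and infinitely many `m`. -/
theorem exists_row_meeting_infinitely_many_boxes (k : ℕ)
    [TopologicalSpace (BruckZero (Bicyclic k))] [T2Space (BruckZero (Bicyclic k))]
    [LocallyCompactSpace (BruckZero (Bicyclic k))]
    (hτ : ShiftContinuous (BruckZero (Bicyclic k)))
    (h0 : ¬ IsOpen ({0} : Set (BruckZero (Bicyclic k))))
    (U : Set (BruckZero (Bicyclic k)))
    (hU : IsOpen U) (h0U : (0 : BruckZero (Bicyclic k)) ∈ U) :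
    ∃ n : ℕ, {m : ℕ | (U ∩ box (Bicyclic k) n m).Nonempty}.Infinite :=
  BruckZero.exists_row_meeting_infinitely_many_boxes hτ h0 (hU.mem_nhds h0U)
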